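/- Let T : K → H be a relative Rota-Baxter operator with respect to a cocommutative left H-module bialgebra (K, ⇀). Then (K, *_T, 1, Δ, ε, S_T) is a Hopf algebra, where a *_T b = a₁(T(a₂) ⇀ b) and S_T(a) = S_H(T(a₁)) ⇀ S_K(a₂), and T : (K, *_T) → H is an algebra homomorphism. -/

import Mathlib

/-!
Relative Rota–Baxter operators on Hopf algebras (Li–Sheng–Tang).
`K` is a left `H`-module bialgebra via `act : H ⊗ K →ₗ K`, and
`T : K →ₗ H` is a coalgebra homomorphism satisfying the relative
Rota–Baxter identity `T(a)·T(b) = T(a₁·(T(a₂) ⇀ b))`.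
Sweedler sums are expressed by applying linear maps to `Coalgebra.comul`.
-/

open TensorProduct Coalgebra LinearMap HopfAlgebra

variable (R H K : Type*) [CommRing R] [Ring H] [HopfAlgebra R H]
  [Ring K] [HopfAlgebra R K]

/-- Cocommutativity of a coalgebra. -/
def IsCocomm (A : Type*) [AddCommGroup A] [Module R A] [Coalgebra R A] : Prop :=
  ∀ x : A, (TensorProduct.comm R A A) (Coalgebra.comul x) = Coalgebra.comul x

/-- `K` is a left `H`-module bialgebra via `act`: a module, a module algebra
and a module coalgebra. -/
structure IsModuleBialgebra (act : H ⊗[R] K →ₗ[R] K) : Prop where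
  /-- `1 ⇀ a = a` -/
  one_act : ∀ a : K, act ((1 : H) ⊗ₜ a) = a
  /-- `(x·y) ⇀ a = x ⇀ (y ⇀ a)` -/
  mul_act : ∀ (x y : H) (a : K), act ((x * y) ⊗ₜ a) = act (x ⊗ₜ act (y ⊗ₜ a))
  /-- `x ⇀ (a·b) = (x₁ ⇀ a)·(x₂ ⇀ b)` -/
  act_mul : ∀ (x : H) (a b : K),
    act (x ⊗ₜ (a * b))
      = LinearMap.mul' R K
          (TensorProduct.map (act ∘ₗ (TensorProduct.mk R H K).flip a)
            (act ∘ₗ (TensorProduct.mk R H K).flip b) (Coalgebra.comul x))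
  /-- `x ⇀ 1 = ε(x)·1` -/
  act_one : ∀ x : H, act (x ⊗ₜ (1 : K)) = Coalgebra.counit (R := R) x • (1 : K)
  /-- `act` is comultiplicative -/
  comul_act : Coalgebra.comul ∘ₗ act
      = TensorProduct.map act act ∘ₗ (Coalgebra.comul (R := R) (A := H ⊗[R] K))
  /-- `act` is counital -/
  counit_act : Coalgebra.counit ∘ₗ act = (Coalgebra.counit (R := R) (A := H ⊗[R] K))

/-- `T : K → H` is a coalgebra homomorphism. -/
structure IsCoalgHom (T : K →ₗ[R] H) : Prop where
  comul_comp : Coalgebra.comul ∘ₗ T = TensorProduct.map T T ∘ₗ Coalgebra.comul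
  counit_comp : Coalgebra.counit ∘ₗ T = (Coalgebra.counit (R := R) (A := K))

/-- The descendent product `a *_T b = a₁·(T(a₂) ⇀ b)` as a linear map. -/
noncomputable def descProd (act : H ⊗[R] K →ₗ[R] K) (T : K →ₗ[R] H) :
    K ⊗[R] K →ₗ[R] K :=
  LinearMap.mul' R K
    ∘ₗ TensorProduct.map LinearMap.id (act ∘ₗ TensorProduct.map T LinearMap.id)
    ∘ₗ (TensorProduct.assoc R K K K).toLinearMap
    ∘ₗ TensorProduct.map Coalgebra.comul LinearMap.id

/-- The relative Rota–Baxter identity `T(a)·T(b) = T(a₁·(T(a₂) ⇀ b))`. -/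
def IsRelRotaBaxter (act : H ⊗[R] K →ₗ[R] K) (T : K →ₗ[R] H) : Prop :=
  ∀ a b : K, T a * T b = T (descProd R H K act T (a ⊗ₜ b))

/-- `S_T(a) = S_H(T(a₁)) ⇀ S_K(a₂)`. -/
noncomputable def descAntipode (act : H ⊗[R] K →ₗ[R] K) (T : K →ₗ[R] H) :
    K →ₗ[R] K :=
  act ∘ₗ TensorProduct.map ((HopfAlgebra.antipode (R := R) (A := H)) ∘ₗ T)
          (HopfAlgebra.antipode (R := R) (A := K))
    ∘ₗ Coalgebra.comul

/-!
The proof works in the convolution algebras of linear maps out of `K`. For fixed `b`, the map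
`a ↦ a *_T b` is the convolution `id ⋆ φ_b` with `φ_b x = T x ⇀ b` (`twistedAct act T b`), and
`S_T` is `(S_H ∘ T) ▷ S_K`, where `f ▷ g = ⇀ ∘ (f ⊗ g) ∘ Δ` (`convAct act f g`) makes `Hom(K, K)` a
module over the convolution algebra `Hom(K, H)`.
Cocommutativity makes `Δ : K → K ⊗ K` a coalgebra map; this is what makes `Δ` multiplicative for
`*_T`, lets `f ▷ -` distribute over convolution, and makes the convolution inverse `S_H ∘ T` of `T`
a coalgebra map. Associativity then comes from the Rota–Baxter identity in the form
`φ_c (a *_T b) = φ_{φ_c b} a`. The right antipode identity reduces to `T ⋆ (S_H ∘ T) = 1`.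
Applying `T` to it and using the Rota–Baxter identity shows that `T ∘ S_T` is a right convolution
inverse of `T`, hence `T ∘ S_T = S_H ∘ T`; with this the left antipode identity reduces to
`(S_H ∘ T) ▷ (S_K ⋆ id) = 1`.
-/

open WithConv

section Convolution
variable {R C A B ι : Type*} [CommSemiring R] [AddCommMonoid C] [Module R C] [Coalgebra R C]

lemma Coalgebra.Repr.sum_counit_mul_counit {c : C} (𝓡 : Coalgebra.Repr R c ι) :
    ∑ i ∈ 𝓡.index, counit (R := R) (𝓡.left i) * counit (𝓡.right i) = counit c := by
  simpa [map_sum] using congr(counit (R := R) $(sum_counit_smul 𝓡))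

lemma map_convOne_comp_comul [Semiring A] [Algebra R A] [Semiring B] [Algebra R B] :
    toConv (map (1 : WithConv (C →ₗ[R] A)).ofConv (1 : WithConv (C →ₗ[R] B)).ofConv ∘ₗ comul)
      = 1 := by
  ext x
  simp only [LinearMap.comp_apply, convOne_apply]
  rw [← (ℛ R x).eq]
  simp [map_sum, Algebra.algebraMap_eq_smul_one, smul_tmul]
  simp_rw [smul_smul, ← Finset.sum_smul, ← (ℛ R x).sum_counit_mul_counit, mul_comm,
    Algebra.TensorProduct.one_def]

lemma convMul_map_comp_comul [Coalgebra.IsCocomm R C] [Semiring A] [Algebra R A] [Semiring B]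
    [Algebra R B] (f f' : C →ₗ[R] A) (g g' : C →ₗ[R] B) :
    toConv (map f g ∘ₗ comul) * toConv (map f' g' ∘ₗ comul) =
      toConv (map (toConv f * toConv f').ofConv (toConv g * toConv g').ofConv ∘ₗ comul) := by
  have := convMul_comp_coalgHom_distrib (toConv (map f g)) (toConv (map f' g'))
    (comulCoalgHom R C)
  rw [map_convMul_map] at this
  exact congrArg toConv this.symm

variable [Semiring A]

lemma antipode_comp_convMul_self [HopfAlgebra R A] (f : C →ₗc[R] A) :
    toConv (antipode R ∘ₗ f.toLinearMap) * toConv f.toLinearMap = 1 := by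
  have := convMul_comp_coalgHom_distrib (toConv (antipode R)) (toConv LinearMap.id) f
  rw [antipode_mul_id] at this
  refine ofConv_injective (this.symm.trans ?_)
  ext x
  simp

lemma self_convMul_antipode_comp [HopfAlgebra R A] (f : C →ₗc[R] A) :
    toConv f.toLinearMap * toConv (antipode R ∘ₗ f.toLinearMap) = 1 := by
  have := convMul_comp_coalgHom_distrib (toConv LinearMap.id) (toConv (antipode R)) f
  rw [id_mul_antipode] at this
  refine ofConv_injective (this.symm.trans ?_)
  ext x
  simp

/-- `comul ∘ g` and `(g ⊗ g) ∘ comul` are a right and a left convolution inverse of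
`comul ∘ f = (f ⊗ f) ∘ comul`. -/
lemma map_comp_comul_of_convMul_eq_one [Coalgebra.IsCocomm R C] [Bialgebra R A]
    {f g : C →ₗ[R] A} (hf : map f f ∘ₗ comul = comul ∘ₗ f) (hgf : toConv g * toConv f = 1)
    (hfg : toConv f * toConv g = 1) :
    map g g ∘ₗ comul = comul ∘ₗ g := by
  have hright : toConv (comul ∘ₗ f) * toConv (comul ∘ₗ g) = 1 := by
    have := algHom_comp_convMul_distrib (Bialgebra.comulAlgHom R A) (toConv f) (toConv g)
    rw [hfg] at this
    refine ofConv_injective (this.symm.trans ?_)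
    ext x
    simp
  have hleft : toConv (map g g ∘ₗ comul) * toConv (comul ∘ₗ f) = 1 := by
    rw [← hf, convMul_map_comp_comul, hgf, map_convOne_comp_comul]
  exact congrArg ofConv (left_inv_eq_right_inv hleft hright)

lemma map_antipode_comp_comp_comul [Coalgebra.IsCocomm R C] [HopfAlgebra R A]
    (f : C →ₗc[R] A) :
    map (antipode R ∘ₗ f.toLinearMap) (antipode R ∘ₗ f.toLinearMap) ∘ₗ comul
      = comul ∘ₗ antipode R ∘ₗ f.toLinearMap :=
  map_comp_comul_of_convMul_eq_one f.map_comp_comul (antipode_comp_convMul_self f)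
    (self_convMul_antipode_comp f)

end Convolution

namespace IsModuleBialgebra
variable {R H K} {act : H ⊗[R] K →ₗ[R] K}

lemma act_comp_rTensor_mul (hmb : IsModuleBialgebra R H K act) :
    act ∘ₗ rTensor K (mul' R H)
      = act ∘ₗ lTensor H act ∘ₗ (TensorProduct.assoc R H H K).toLinearMap := by
  ext x y a
  simp [hmb.mul_act]

lemma act_comp_lTensor_mul (hmb : IsModuleBialgebra R H K act) :
    act ∘ₗ lTensor H (mul' R K) = mul' R K ∘ₗ map act act
      ∘ₗ (tensorTensorTensorComm R H H K K).toLinearMap ∘ₗ rTensor (K ⊗[R] K) comul := by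
  refine TensorProduct.ext_threefold' fun x a b => ?_
  simp only [LinearMap.comp_apply, LinearEquiv.coe_coe, lTensor_tmul, mul'_apply, rTensor_tmul]
  rw [hmb.act_mul]
  induction comul (R := R) x using TensorProduct.induction_on with
  | zero => simp
  | tmul y z => simp
  | add y z hy hz => simp only [map_add, add_tmul, hy, hz]

lemma act_comp_rTensor_algebraLinearMap (hmb : IsModuleBialgebra R H K act) :
    act ∘ₗ rTensor K (Algebra.linearMap R H) = (TensorProduct.lid R K).toLinearMap := by
  ext a
  simp [Algebra.algebraMap_eq_smul_one, hmb.one_act]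

end IsModuleBialgebra

section ConvAct
variable {R H K} {C : Type*} [AddCommGroup C] [Module R C] [Coalgebra R C]

variable (act : H ⊗[R] K →ₗ[R] K) in
def convAct (f : C →ₗ[R] H) (g : C →ₗ[R] K) : C →ₗ[R] K := act ∘ₗ map f g ∘ₗ comul

variable {act : H ⊗[R] K →ₗ[R] K}

lemma convAct_convMul_left (hmb : IsModuleBialgebra R H K act) (f f' : C →ₗ[R] H)
    (g : C →ₗ[R] K) :
    convAct act (toConv f * toConv f').ofConv g = convAct act f (convAct act f' g) := by
  have lhs : convAct act (toConv f * toConv f').ofConv g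
      = act ∘ₗ rTensor K (mul' R H) ∘ₗ map (map f f') g ∘ₗ rTensor C comul ∘ₗ comul := by
    simp only [convAct, LinearMap.convMul_def, coassoc_simps]
  have rhs : convAct act f (convAct act f' g)
      = act ∘ₗ lTensor H act ∘ₗ map f (map f' g) ∘ₗ lTensor C comul ∘ₗ comul := by
    simp only [convAct, coassoc_simps]
  rw [lhs, rhs, ← LinearMap.comp_assoc, hmb.act_comp_rTensor_mul]
  simp only [coassoc_simps]

lemma convAct_convOne_left (hmb : IsModuleBialgebra R H K act) (g : C →ₗ[R] K) :
    convAct act (1 : WithConv (C →ₗ[R] H)).ofConv g = g := by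
  have : convAct act (1 : WithConv (C →ₗ[R] H)).ofConv g
      = act ∘ₗ rTensor K (Algebra.linearMap R H) ∘ₗ map counit g ∘ₗ comul := by
    simp only [convAct, LinearMap.convOne_def, coassoc_simps]
  rw [this, ← LinearMap.comp_assoc, hmb.act_comp_rTensor_algebraLinearMap]
  ext x
  simp [← LinearMap.lTensor_comp_rTensor]

lemma convAct_convMul_right [Coalgebra.IsCocomm R C] (hmb : IsModuleBialgebra R H K act)
    {f : C →ₗ[R] H} (hf : map f f ∘ₗ comul = comul ∘ₗ f) (g g' : C →ₗ[R] K) :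
    convAct act f (toConv g * toConv g').ofConv
      = (toConv (convAct act f g) * toConv (convAct act f g')).ofConv := by
  have lhs : convAct act f (toConv g * toConv g').ofConv
      = act ∘ₗ lTensor H (mul' R K) ∘ₗ map f (map g g') ∘ₗ lTensor C comul ∘ₗ comul := by
    simp only [convAct, LinearMap.convMul_def, coassoc_simps]
  rw [lhs, ← LinearMap.comp_assoc, hmb.act_comp_lTensor_mul]
  simp only [convAct, LinearMap.convMul_def, coassoc_simps, ← hf]

lemma convAct_convOne_right (hmb : IsModuleBialgebra R H K act) {f : C →ₗ[R] H}
    (hf : counit ∘ₗ f = counit) :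
    convAct act f (1 : WithConv (C →ₗ[R] K)).ofConv = (1 : WithConv (C →ₗ[R] K)).ofConv := by
  have hf' (x : C) : counit (R := R) (f x) = counit x := congr($hf x)
  ext x
  simp only [convAct, LinearMap.comp_apply]
  rw [← (ℛ R x).eq]
  simp [map_sum, Algebra.algebraMap_eq_smul_one, hmb.act_one, hf']
  simp_rw [smul_smul, ← Finset.sum_smul, ← (ℛ R x).sum_counit_mul_counit, mul_comm]

lemma map_convAct_comp_comul [Coalgebra.IsCocomm R C] (hmb : IsModuleBialgebra R H K act)
    {f : C →ₗ[R] H} {g : C →ₗ[R] K} (hf : map f f ∘ₗ comul = comul ∘ₗ f)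
    (hg : map g g ∘ₗ comul = comul ∘ₗ g) :
    map (convAct act f g) (convAct act f g) ∘ₗ comul = comul ∘ₗ convAct act f g := by
  simp only [convAct, ← LinearMap.comp_assoc, hmb.comul_act]
  simp only [coassoc_simps, TensorProduct.comul_def, ← hf, ← hg]

end ConvAct

section Descendent
variable {R H K} {act : H ⊗[R] K →ₗ[R] K} {T : K →ₗ[R] H}

def IsCoalgHom.toCoalgHom (hT : IsCoalgHom R H K T) : K →ₗc[R] H where
  toLinearMap := T
  counit_comp := hT.counit_comp
  map_comp_comul := hT.comul_comp.symm

lemma IsCoalgHom.comul_apply (hT : IsCoalgHom R H K T) (x : K) :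
    comul (T x) = map T T (comul (R := R) x) :=
  congr($(hT.comul_comp) x)

lemma IsCoalgHom.counit_apply (hT : IsCoalgHom R H K T) (x : K) :
    counit (R := R) (T x) = counit x :=
  congr($(hT.counit_comp) x)

variable (act T) in
def twistedAct (b : K) : K →ₗ[R] K := act ∘ₗ (mk R H K).flip b ∘ₗ T

@[simp] lemma twistedAct_apply (b x : K) : twistedAct act T b x = act (T x ⊗ₜ b) := rfl

lemma descProd_tmul (a b : K) :
    descProd R H K act T (a ⊗ₜ b)
      = (toConv (LinearMap.id : K →ₗ[R] K) * toConv (twistedAct act T b)) a := by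
  rw [LinearMap.convMul_apply]
  simp only [descProd, LinearMap.comp_apply, map_tmul, LinearMap.id_apply, LinearEquiv.coe_coe]
  induction comul (R := R) a using TensorProduct.induction_on with
  | zero => simp
  | tmul y z => simp
  | add y z hy hz => simp only [map_add, add_tmul, hy, hz]

lemma comul_comp_twistedAct (hmb : IsModuleBialgebra R H K act) (hT : IsCoalgHom R H K T)
    {ι : Type*} {b : K} (𝓡 : Coalgebra.Repr R b ι) :
    comul ∘ₗ twistedAct act T b
      = ∑ i ∈ 𝓡.index, map (twistedAct act T (𝓡.left i)) (twistedAct act T (𝓡.right i))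
          ∘ₗ comul := by
  ext x
  have := congr($(hmb.comul_act) (T x ⊗ₜ b))
  simp only [LinearMap.comp_apply, TensorProduct.comul_tmul] at this
  rw [LinearMap.comp_apply, twistedAct_apply, this, ← 𝓡.eq, hT.comul_apply, LinearMap.sum_apply]
  simp only [LinearMap.comp_apply]
  induction comul (R := R) x using TensorProduct.induction_on with
  | zero => simp
  | tmul y z => simp [tmul_sum]
  | add y z hy hz => simp only [map_add, add_tmul, hy, hz, Finset.sum_add_distrib]

lemma twistedAct_mul (hmb : IsModuleBialgebra R H K act) (hT : IsCoalgHom R H K T) (b b' : K) :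
    twistedAct act T (b * b')
      = (toConv (twistedAct act T b) * toConv (twistedAct act T b')).ofConv := by
  ext x
  rw [twistedAct_apply, hmb.act_mul, hT.comul_apply, ← LinearMap.comp_apply (map _ _),
    ← TensorProduct.map_comp]
  rfl

lemma twistedAct_one (hmb : IsModuleBialgebra R H K act) (hT : IsCoalgHom R H K T) :
    twistedAct act T 1 = (1 : WithConv (K →ₗ[R] K)).ofConv := by
  ext x
  simp [hmb.act_one, hT.counit_apply, Algebra.algebraMap_eq_smul_one]

lemma twistedAct_comp_id_convMul_twistedAct (hmb : IsModuleBialgebra R H K act)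
    (hrb : IsRelRotaBaxter R H K act T) (b c : K) :
    twistedAct act T c ∘ₗ (toConv LinearMap.id * toConv (twistedAct act T b)).ofConv
      = twistedAct act T (twistedAct act T c b) := by
  ext a
  rw [LinearMap.comp_apply, ← descProd_tmul, twistedAct_apply, ← hrb, hmb.mul_act]
  rfl

lemma comul_comp_id_convMul_twistedAct [Coalgebra.IsCocomm R K]
    (hmb : IsModuleBialgebra R H K act) (hT : IsCoalgHom R H K T) {ι : Type*} {b : K}
    (𝓡 : Coalgebra.Repr R b ι) :
    comul ∘ₗ (toConv LinearMap.id * toConv (twistedAct act T b)).ofConv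
      = ∑ i ∈ 𝓡.index, map (toConv LinearMap.id * toConv (twistedAct act T (𝓡.left i))).ofConv
          (toConv LinearMap.id * toConv (twistedAct act T (𝓡.right i))).ofConv ∘ₗ comul := by
  calc comul ∘ₗ (toConv LinearMap.id * toConv (twistedAct act T b)).ofConv
      = (toConv (map LinearMap.id LinearMap.id ∘ₗ comul) *
          toConv (∑ i ∈ 𝓡.index, map (twistedAct act T (𝓡.left i))
            (twistedAct act T (𝓡.right i)) ∘ₗ comul)).ofConv := by
        rw [← comul_comp_twistedAct hmb hT 𝓡, TensorProduct.map_id, LinearMap.id_comp]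
        exact algHom_comp_convMul_distrib (Bialgebra.comulAlgHom R K) _ _
    _ = _ := by
        rw [toConv_sum, Finset.mul_sum, ofConv_sum]
        simp_rw [convMul_map_comp_comul]

lemma comul_descProd_tmul [Coalgebra.IsCocomm R K] (hmb : IsModuleBialgebra R H K act)
    (hT : IsCoalgHom R H K T) (a b : K) {ι : Type*} (𝓡 : Coalgebra.Repr R b ι) :
    comul (descProd R H K act T (a ⊗ₜ b))
      = ∑ i ∈ 𝓡.index, map (toConv LinearMap.id * toConv (twistedAct act T (𝓡.left i))).ofConv
          (toConv LinearMap.id * toConv (twistedAct act T (𝓡.right i))).ofConv (comul a) := by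
  rw [descProd_tmul, ← LinearMap.comp_apply (comul (R := R)),
    comul_comp_id_convMul_twistedAct hmb hT 𝓡, LinearMap.sum_apply]
  rfl

lemma descProd_assoc [Coalgebra.IsCocomm R K] (hmb : IsModuleBialgebra R H K act)
    (hT : IsCoalgHom R H K T) (hrb : IsRelRotaBaxter R H K act T) (a b c : K) :
    descProd R H K act T (descProd R H K act T (a ⊗ₜ b) ⊗ₜ c)
      = descProd R H K act T (a ⊗ₜ descProd R H K act T (b ⊗ₜ c)) := by
  set 𝓡 := ℛ R b
  calc descProd R H K act T (descProd R H K act T (a ⊗ₜ b) ⊗ₜ c)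
      = mul' R K (map LinearMap.id (twistedAct act T c)
          (comul (descProd R H K act T (a ⊗ₜ b)))) := by
        rw [descProd_tmul, LinearMap.convMul_apply]
    _ = ∑ i ∈ 𝓡.index, (toConv LinearMap.id * toConv (twistedAct act T (𝓡.left i)) *
          toConv (twistedAct act T (twistedAct act T c (𝓡.right i))) :
            WithConv (K →ₗ[R] K)) a := by
        rw [comul_descProd_tmul hmb hT a b 𝓡, map_sum, map_sum]
        refine Finset.sum_congr rfl fun i _ => ?_
        rw [← twistedAct_comp_id_convMul_twistedAct hmb hrb, LinearMap.convMul_apply,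
          ← LinearMap.comp_apply (map _ _), ← TensorProduct.map_comp]
        rfl
    _ = ∑ i ∈ 𝓡.index,
          descProd R H K act T (a ⊗ₜ (𝓡.left i * twistedAct act T c (𝓡.right i))) := by
        simp_rw [descProd_tmul, twistedAct_mul hmb hT, mul_assoc]
    _ = descProd R H K act T (a ⊗ₜ descProd R H K act T (b ⊗ₜ c)) := by
        rw [← map_sum, ← tmul_sum, descProd_tmul b, 𝓡.convMul_apply]
        rfl

lemma comul_comp_descProd [Coalgebra.IsCocomm R K] (hmb : IsModuleBialgebra R H K act)
    (hT : IsCoalgHom R H K T) :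
    comul ∘ₗ descProd R H K act T
      = map (descProd R H K act T) (descProd R H K act T) ∘ₗ comul (A := K ⊗[R] K) := by
  refine TensorProduct.ext' fun a b => ?_
  rw [LinearMap.comp_apply, comul_descProd_tmul hmb hT a b (ℛ R b), LinearMap.comp_apply,
    TensorProduct.comul_tmul, ← (ℛ R b).eq]
  induction comul (R := R) a using TensorProduct.induction_on with
  | zero => simp
  | tmul y z => simp [tmul_sum, descProd_tmul]
  | add y z hy hz => simp only [map_add, add_tmul, hy, hz, Finset.sum_add_distrib]

lemma counit_comp_descProd (hmb : IsModuleBialgebra R H K act) (hT : IsCoalgHom R H K T) :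
    counit ∘ₗ descProd R H K act T = counit (A := K ⊗[R] K) := by
  refine TensorProduct.ext' fun a b => ?_
  have hact (h : H) (y : K) : counit (R := R) (act (h ⊗ₜ y)) = counit h * counit y := by
    simpa [mul_comm] using congr($(hmb.counit_act) (h ⊗ₜ y))
  rw [LinearMap.comp_apply, descProd_tmul, (ℛ R a).convMul_apply]
  simp [map_sum, hact, hT.counit_apply, ← mul_assoc, ← Finset.sum_mul,
    (ℛ R a).sum_counit_mul_counit]
  exact mul_comm _ _

lemma descProd_one_tmul_eq_act (b : K) : descProd R H K act T (1 ⊗ₜ b) = act (T 1 ⊗ₜ b) := by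
  simp [descProd, Bialgebra.comul_one, Algebra.TensorProduct.one_def]

lemma IsRelRotaBaxter.map_one (hmb : IsModuleBialgebra R H K act) (hT : IsCoalgHom R H K T)
    (hrb : IsRelRotaBaxter R H K act T) : T 1 = 1 := by
  have hT1 : IsGroupLikeElem R (T 1) := IsGroupLikeElem.one.map hT.toCoalgHom
  refine hT1.isUnit.mul_left_cancel ?_
  rw [hrb, descProd_one_tmul_eq_act, hmb.act_one, hT1.counit_eq_one, one_smul, mul_one]

lemma descProd_tmul_one (hmb : IsModuleBialgebra R H K act) (hT : IsCoalgHom R H K T) (a : K) :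
    descProd R H K act T (a ⊗ₜ 1) = a := by
  rw [descProd_tmul, twistedAct_one hmb hT, mul_one]
  rfl

lemma descProd_one_tmul (hmb : IsModuleBialgebra R H K act) (hT : IsCoalgHom R H K T)
    (hrb : IsRelRotaBaxter R H K act T) (b : K) :
    descProd R H K act T (1 ⊗ₜ b) = b := by
  rw [descProd_one_tmul_eq_act, hrb.map_one hmb hT, hmb.one_act]

lemma IsRelRotaBaxter.comp_descProd (hrb : IsRelRotaBaxter R H K act T) :
    T ∘ₗ descProd R H K act T = mul' R H ∘ₗ map T T :=
  TensorProduct.ext' fun a b => (hrb a b).symm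

lemma descProd_comp_map_comp_comul {g : K →ₗ[R] K} (hg : map g g ∘ₗ comul = comul ∘ₗ g)
    (g' : K →ₗ[R] K) :
    descProd R H K act T ∘ₗ map g g' ∘ₗ comul
      = (toConv g * toConv (convAct act (T ∘ₗ g) g')).ofConv := by
  simp only [descProd, convAct, LinearMap.convMul_def]
  simp only [coassoc_simps, ← hg]

lemma descProd_comp_map_id_descAntipode (hmb : IsModuleBialgebra R H K act)
    (hT : IsCoalgHom R H K T) :
    descProd R H K act T ∘ₗ map LinearMap.id (descAntipode R H K act T) ∘ₗ comul
      = (1 : WithConv (K →ₗ[R] K)).ofConv := by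
  have hTS : toConv T * toConv (antipode R ∘ₗ T) = 1 := self_convMul_antipode_comp hT.toCoalgHom
  calc descProd R H K act T ∘ₗ map LinearMap.id (descAntipode R H K act T) ∘ₗ comul
      = (toConv LinearMap.id * toConv (convAct act T
          (convAct act (antipode R ∘ₗ T) (antipode R)))).ofConv :=
        descProd_comp_map_comp_comul (CoalgHom.id R K).map_comp_comul _
    _ = (toConv LinearMap.id * toConv (antipode R) : WithConv (K →ₗ[R] K)).ofConv := by
        rw [← convAct_convMul_left hmb, hTS, convAct_convOne_left hmb]
    _ = (1 : WithConv (K →ₗ[R] K)).ofConv := by rw [id_mul_antipode]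

lemma comp_descAntipode (hmb : IsModuleBialgebra R H K act) (hT : IsCoalgHom R H K T)
    (hrb : IsRelRotaBaxter R H K act T) :
    T ∘ₗ descAntipode R H K act T = antipode R ∘ₗ T := by
  have hleft : toConv (antipode R ∘ₗ T) * toConv T = 1 :=
    antipode_comp_convMul_self hT.toCoalgHom
  have hright : toConv T * toConv (T ∘ₗ descAntipode R H K act T) = 1 := by
    apply ofConv_injective
    calc (toConv T * toConv (T ∘ₗ descAntipode R H K act T)).ofConv
        = T ∘ₗ descProd R H K act T ∘ₗ map LinearMap.id (descAntipode R H K act T)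
            ∘ₗ comul := by
          rw [← LinearMap.comp_assoc, hrb.comp_descProd]
          simp only [LinearMap.convMul_def, coassoc_simps]
      _ = (1 : WithConv (K →ₗ[R] H)).ofConv := by
          rw [descProd_comp_map_id_descAntipode hmb hT]
          ext x
          simp [Algebra.algebraMap_eq_smul_one, hrb.map_one hmb hT]
  exact congrArg ofConv (left_inv_eq_right_inv hleft hright).symm

lemma descProd_comp_map_descAntipode_id [Coalgebra.IsCocomm R K]
    (hmb : IsModuleBialgebra R H K act) (hT : IsCoalgHom R H K T)
    (hrb : IsRelRotaBaxter R H K act T) :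
    descProd R H K act T ∘ₗ map (descAntipode R H K act T) LinearMap.id ∘ₗ comul
      = (1 : WithConv (K →ₗ[R] K)).ofConv := by
  have hST := map_antipode_comp_comp_comul hT.toCoalgHom
  calc descProd R H K act T ∘ₗ map (descAntipode R H K act T) LinearMap.id ∘ₗ comul
      = (toConv (descAntipode R H K act T) *
          toConv (convAct act (T ∘ₗ descAntipode R H K act T) LinearMap.id)).ofConv :=
        descProd_comp_map_comp_comul
          (map_convAct_comp_comul hmb hST (map_antipode_comp_comp_comul (CoalgHom.id R K)))
          LinearMap.id
    _ = (toConv (convAct act (antipode R ∘ₗ T) (antipode R)) *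
          toConv (convAct act (antipode R ∘ₗ T) LinearMap.id) :
            WithConv (K →ₗ[R] K)).ofConv := by
        rw [comp_descAntipode hmb hT hrb]
        rfl
    _ = convAct act (antipode R ∘ₗ T)
          (toConv (antipode R) * toConv LinearMap.id : WithConv (K →ₗ[R] K)).ofConv :=
        (convAct_convMul_right hmb hST (antipode R) LinearMap.id).symm
    _ = (1 : WithConv (K →ₗ[R] K)).ofConv := by
        rw [antipode_mul_id]
        exact convAct_convOne_right hmb (by ext; simp [hT.counit_apply])

end Descendent

/-- For a relative Rota–Baxter operator `T : K → H` with respect to a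
cocommutative left `H`-module bialgebra `(K, ⇀)`, the descendent structure
`(K, *_T, 1, Δ, ε, S_T)` is a Hopf algebra, and `T` is an algebra
homomorphism from it to `H`. -/
theorem descendent_hopf (act : H ⊗[R] K →ₗ[R] K) (T : K →ₗ[R] H)
    (hmb : IsModuleBialgebra R H K act) (hT : IsCoalgHom R H K T)
    (hrb : IsRelRotaBaxter R H K act T) (hco : _root_.IsCocomm R K) :
    -- `*_T` is associative
    (∀ a b c : K,
      descProd R H K act T (descProd R H K act T (a ⊗ₜ b) ⊗ₜ c)
        = descProd R H K act T (a ⊗ₜ descProd R H K act T (b ⊗ₜ c))) ∧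
    -- `1` is a unit for `*_T`
    (∀ a : K, descProd R H K act T (a ⊗ₜ (1 : K)) = a) ∧
    (∀ a : K, descProd R H K act T ((1 : K) ⊗ₜ a) = a) ∧
    -- `Δ` and `ε` are algebra homomorphisms for `*_T`
    (Coalgebra.comul ∘ₗ descProd R H K act T
      = TensorProduct.map (descProd R H K act T) (descProd R H K act T)
          ∘ₗ (Coalgebra.comul (R := R) (A := K ⊗[R] K))) ∧
    (Coalgebra.counit ∘ₗ descProd R H K act T
      = (Coalgebra.counit (R := R) (A := K ⊗[R] K))) ∧
    -- `S_T` is an antipode for `(K, *_T, 1, Δ, ε)`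
    (∀ a : K,
      descProd R H K act T
          (TensorProduct.map LinearMap.id (descAntipode R H K act T)
            (Coalgebra.comul a))
        = Coalgebra.counit (R := R) a • (1 : K)) ∧
    (∀ a : K,
      descProd R H K act T
          (TensorProduct.map (descAntipode R H K act T) LinearMap.id
            (Coalgebra.comul a))
        = Coalgebra.counit (R := R) a • (1 : K)) ∧
    -- `T : K_T → H` is an algebra homomorphism
    (∀ a b : K, T (descProd R H K act T (a ⊗ₜ b)) = T a * T b) ∧
    T (1 : K) = (1 : H) := by
  have : Coalgebra.IsCocomm R K := ⟨LinearMap.ext hco⟩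
  refine ⟨descProd_assoc hmb hT hrb, descProd_tmul_one hmb hT, descProd_one_tmul hmb hT hrb,
    comul_comp_descProd hmb hT, counit_comp_descProd hmb hT, fun a => ?_, fun a => ?_,
    fun a b => (hrb a b).symm, hrb.map_one hmb hT⟩
  · simpa [Algebra.algebraMap_eq_smul_one] using
      congr($(descProd_comp_map_id_descAntipode hmb hT) a)
  · simpa [Algebra.algebraMap_eq_smul_one] using
      congr($(descProd_comp_map_descAntipode_id hmb hT hrb) a)
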